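/- Let (G,τ) = (G₁,τ₁) × (G₂,τ₂) be a product of topological abelian groups and φ = φ₁ × φ₂ where φᵢ: (Gᵢ,τᵢ) → (Gᵢ,τᵢ) are continuous endomorphisms. Then ent*_τ(φ) = ent*_{τ₁}(φ₁) + ent*_{τ₂}(φ₂). -/

import Mathlib

open Filter Topology ENNReal

variable {G : Type*} [AddCommGroup G]

/-- `B_n(φ,N) = N ∩ φ⁻¹(N) ∩ … ∩ φ^{-(n-1)}(N)`. -/
noncomputable def Bsub (φ : AddMonoid.End G) (N : AddSubgroup G) (n : ℕ) : AddSubgroup G :=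
  ⨅ i ∈ Finset.range n, N.comap (φ ^ i : AddMonoid.End G)

/-- `H*(φ,N) = lim_n log|G/B_n(φ,N)|/n`. -/
noncomputable def Hstar (φ : AddMonoid.End G) (N : AddSubgroup G) : ℝ :=
  limUnder atTop fun n : ℕ => Real.log ((Bsub φ N n).index) / n

/-- The topological adjoint entropy: sup of `H*(φ,N)` over `τ`-open finite-index subgroups. -/
noncomputable def entStar (t : TopologicalSpace G) (φ : AddMonoid.End G) : ℝ≥0∞ :=
  ⨆ (N : AddSubgroup G) (_ : @IsOpen G t ↑N ∧ N.FiniteIndex), ENNReal.ofReal (Hstar φ N)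

/-! `n ↦ log [G : B_n(φ,N)]` is subadditive, so by Fekete's lemma the limit defining `H*(φ,N)`
exists, and `H*(φ,N)` is antitone in `N`. For the product, `B_n(φ₁ × φ₂, N₁ × N₂)` is
`B_n(φ₁,N₁) × B_n(φ₂,N₂)` and indices multiply, so `H*` is additive on product subgroups. These are
cofinal among the open finite-index subgroups of `G₁ × G₂`: any such `N` contains
`(N ∩ G₁) × (N ∩ G₂)`. -/

lemma AddSubgroup.index_comap_dvd_of_normal {A B : Type*} [AddGroup A] [AddGroup B] (f : A →+ B)
    (N : AddSubgroup B) [N.Normal] : (N.comap f).index ∣ N.index := by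
  rw [AddSubgroup.index_comap]
  exact AddSubgroup.relIndex_dvd_index_of_normal _ _

lemma AddSubgroup.FiniteIndex.comap_of_normal {A B : Type*} [AddGroup A] [AddGroup B] (f : A →+ B)
    {N : AddSubgroup B} [N.Normal] (hN : N.FiniteIndex) : (N.comap f).FiniteIndex :=
  ⟨ne_zero_of_dvd_ne_zero hN.index_ne_zero (N.index_comap_dvd_of_normal f)⟩

section Bsub

variable {φ : AddMonoid.End G} {N K : AddSubgroup G}

lemma mem_Bsub {n : ℕ} {x : G} : x ∈ Bsub φ N n ↔ ∀ i < n, (φ ^ i) x ∈ N := by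
  simp only [Bsub, AddSubgroup.mem_iInf, Finset.mem_range]
  rfl

lemma Bsub_mono (h : K ≤ N) (n : ℕ) : Bsub φ K n ≤ Bsub φ N n := fun _ hx =>
  mem_Bsub.2 fun i hi => h (mem_Bsub.1 hx i hi)

lemma Bsub_add (m n : ℕ) : Bsub φ N (m + n) = Bsub φ N m ⊓ (Bsub φ N n).comap (φ ^ m) := by
  ext x
  have pow_add_apply (i : ℕ) : (φ ^ (i + m)) x = (φ ^ i) ((φ ^ m) x) := by rw [pow_add]; rfl
  show x ∈ Bsub φ N (m + n) ↔ x ∈ Bsub φ N m ∧ (φ ^ m) x ∈ Bsub φ N n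
  simp only [mem_Bsub]
  refine ⟨fun h => ⟨fun i hi => h i (by omega), fun i hi => pow_add_apply i ▸ h (i + m) (by omega)⟩,
    fun ⟨h₁, h₂⟩ i hi => ?_⟩
  rcases lt_or_ge i m with him | hmi
  · exact h₁ i him
  · simpa only [← pow_add_apply, Nat.sub_add_cancel hmi] using h₂ (i - m) (by omega)

lemma finiteIndex_Bsub (hN : N.FiniteIndex) (n : ℕ) : (Bsub φ N n).FiniteIndex :=
  AddSubgroup.finiteIndex_iInf' _ fun _ _ => hN.comap_of_normal _

lemma index_Bsub_pos (hN : N.FiniteIndex) (n : ℕ) : 0 < (Bsub φ N n).index :=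
  Nat.pos_of_ne_zero (finiteIndex_Bsub hN n).index_ne_zero

lemma index_Bsub_add_le (hN : N.FiniteIndex) (m n : ℕ) :
    (Bsub φ N (m + n)).index ≤ (Bsub φ N m).index * (Bsub φ N n).index := by
  rw [Bsub_add]
  refine AddSubgroup.index_inf_le.trans (Nat.mul_le_mul_left _ ?_)
  exact Nat.le_of_dvd (index_Bsub_pos hN n) (AddSubgroup.index_comap_dvd_of_normal _ _)

lemma subadditive_log_index_Bsub (hN : N.FiniteIndex) :
    Subadditive fun n => Real.log (Bsub φ N n).index := by
  intro m n
  have hpos (k : ℕ) : (0 : ℝ) < (Bsub φ N k).index := by exact_mod_cast index_Bsub_pos hN k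
  rw [← Real.log_mul (hpos m).ne' (hpos n).ne']
  exact Real.log_le_log (hpos _) (by exact_mod_cast index_Bsub_add_le hN m n)

lemma log_index_Bsub_div_nonneg (hN : N.FiniteIndex) (n : ℕ) :
    0 ≤ Real.log (Bsub φ N n).index / n :=
  div_nonneg (Real.log_nonneg (by exact_mod_cast index_Bsub_pos hN n)) n.cast_nonneg

lemma tendsto_Hstar (hN : N.FiniteIndex) :
    Tendsto (fun n : ℕ => Real.log (Bsub φ N n).index / n) atTop (𝓝 (Hstar φ N)) := by
  have hlim := (subadditive_log_index_Bsub (φ := φ) hN).tendsto_lim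
    ⟨0, Set.forall_mem_range.2 (log_index_Bsub_div_nonneg hN)⟩
  rwa [← hlim.limUnder_eq] at hlim

lemma Hstar_nonneg (hN : N.FiniteIndex) : 0 ≤ Hstar φ N :=
  ge_of_tendsto' (tendsto_Hstar hN) (log_index_Bsub_div_nonneg hN)

lemma Hstar_anti (hK : K.FiniteIndex) (h : K ≤ N) : Hstar φ N ≤ Hstar φ K := by
  have hN : N.FiniteIndex := AddSubgroup.finiteIndex_of_le h
  refine le_of_tendsto_of_tendsto' (tendsto_Hstar hN) (tendsto_Hstar hK) fun n => ?_
  gcongr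
  · exact_mod_cast index_Bsub_pos hN n
  · exact_mod_cast Nat.le_of_dvd (index_Bsub_pos hK n)
      (AddSubgroup.index_dvd_of_le (Bsub_mono h n))

end Bsub

lemma ofReal_Hstar_le_entStar {t : TopologicalSpace G} {φ : AddMonoid.End G} {N : AddSubgroup G}
    (hNo : IsOpen[t] (N : Set G)) (hN : N.FiniteIndex) :
    ENNReal.ofReal (Hstar φ N) ≤ entStar t φ :=
  le_iSup₂_of_le N ⟨hNo, hN⟩ le_rfl

section Prod

variable {G₁ G₂ : Type*} [AddCommGroup G₁] [AddCommGroup G₂]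

def AddMonoid.End.prod (φ₁ : AddMonoid.End G₁) (φ₂ : AddMonoid.End G₂) :
    AddMonoid.End (G₁ × G₂) :=
  AddMonoidHom.prodMap φ₁ φ₂

lemma AddMonoid.End.prod_pow_apply (φ₁ : AddMonoid.End G₁) (φ₂ : AddMonoid.End G₂) (n : ℕ)
    (x : G₁ × G₂) : (φ₁.prod φ₂ ^ n) x = ((φ₁ ^ n) x.1, (φ₂ ^ n) x.2) := by
  simp only [AddMonoid.End.coe_pow]
  exact congrFun (Prod.map_iterate (⇑φ₁) (⇑φ₂) n) x

lemma AddSubgroup.prod_comap_inl_comap_inr_le (N : AddSubgroup (G₁ × G₂)) :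
    (N.comap (AddMonoidHom.inl G₁ G₂)).prod (N.comap (AddMonoidHom.inr G₁ G₂)) ≤ N :=
  AddSubgroup.prod_le_iff.2 ⟨AddSubgroup.map_comap_le _ _, AddSubgroup.map_comap_le _ _⟩

lemma AddSubgroup.FiniteIndex.prod {N₁ : AddSubgroup G₁} {N₂ : AddSubgroup G₂}
    (h₁ : N₁.FiniteIndex) (h₂ : N₂.FiniteIndex) : (N₁.prod N₂).FiniteIndex :=
  ⟨by rw [AddSubgroup.index_prod]; exact mul_ne_zero h₁.index_ne_zero h₂.index_ne_zero⟩

variable (φ₁ : AddMonoid.End G₁) (φ₂ : AddMonoid.End G₂)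

lemma Bsub_prod (N₁ : AddSubgroup G₁) (N₂ : AddSubgroup G₂) (n : ℕ) :
    Bsub (φ₁.prod φ₂) (N₁.prod N₂) n = (Bsub φ₁ N₁ n).prod (Bsub φ₂ N₂ n) := by
  ext x
  simp only [mem_Bsub, AddSubgroup.mem_prod, AddMonoid.End.prod_pow_apply]
  exact forall₂_and

lemma Hstar_prod {N₁ : AddSubgroup G₁} {N₂ : AddSubgroup G₂}
    (h₁ : N₁.FiniteIndex) (h₂ : N₂.FiniteIndex) :
    Hstar (φ₁.prod φ₂) (N₁.prod N₂) = Hstar φ₁ N₁ + Hstar φ₂ N₂ := by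
  refine tendsto_nhds_unique (tendsto_Hstar (h₁.prod h₂)) ?_
  refine ((tendsto_Hstar h₁).add (tendsto_Hstar h₂)).congr fun n => ?_
  rw [Bsub_prod, AddSubgroup.index_prod, Nat.cast_mul, ← add_div,
    Real.log_mul (by exact_mod_cast (index_Bsub_pos h₁ n).ne')
      (by exact_mod_cast (index_Bsub_pos h₂ n).ne')]

variable [TopologicalSpace G₁] [TopologicalSpace G₂]

lemma entStar_prod_le :
    entStar inferInstance (φ₁.prod φ₂) ≤
      entStar ‹TopologicalSpace G₁› φ₁ + entStar ‹TopologicalSpace G₂› φ₂ := by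
  refine iSup₂_le fun N ⟨hNo, hN⟩ => ?_
  set N₁ := N.comap (AddMonoidHom.inl G₁ G₂)
  set N₂ := N.comap (AddMonoidHom.inr G₁ G₂)
  have h₁ : N₁.FiniteIndex := hN.comap_of_normal _
  have h₂ : N₂.FiniteIndex := hN.comap_of_normal _
  calc ENNReal.ofReal (Hstar (φ₁.prod φ₂) N)
      ≤ ENNReal.ofReal (Hstar (φ₁.prod φ₂) (N₁.prod N₂)) :=
        ENNReal.ofReal_le_ofReal (Hstar_anti (h₁.prod h₂) N.prod_comap_inl_comap_inr_le)
    _ = ENNReal.ofReal (Hstar φ₁ N₁) + ENNReal.ofReal (Hstar φ₂ N₂) := by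
        rw [Hstar_prod φ₁ φ₂ h₁ h₂, ENNReal.ofReal_add (Hstar_nonneg h₁) (Hstar_nonneg h₂)]
    _ ≤ _ := by
        gcongr
        · exact ofReal_Hstar_le_entStar (hNo.preimage (.prodMk_left 0)) h₁
        · exact ofReal_Hstar_le_entStar (hNo.preimage (.prodMk_right 0)) h₂

lemma le_entStar_prod :
    entStar ‹TopologicalSpace G₁› φ₁ + entStar ‹TopologicalSpace G₂› φ₂ ≤
      entStar inferInstance (φ₁.prod φ₂) := by
  refine ENNReal.biSup_add_biSup_le' ⟨⊤, isOpen_univ, inferInstance⟩ ⟨⊤, isOpen_univ, inferInstance⟩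
    fun N₁ ⟨hNo₁, h₁⟩ N₂ ⟨hNo₂, h₂⟩ => ?_
  rw [← ENNReal.ofReal_add (Hstar_nonneg h₁) (Hstar_nonneg h₂), ← Hstar_prod φ₁ φ₂ h₁ h₂]
  exact ofReal_Hstar_le_entStar (by simpa only [AddSubgroup.coe_prod] using hNo₁.prod hNo₂)
    (h₁.prod h₂)

end Prod

theorem stmt10_general {G₁ G₂ : Type*} [AddCommGroup G₁] [AddCommGroup G₂]
    [TopologicalSpace G₁]
    [TopologicalSpace G₂]
    (φ₁ : AddMonoid.End G₁)
    (φ₂ : AddMonoid.End G₂) :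
    entStar (inferInstance : TopologicalSpace (G₁ × G₂))
        ((φ₁ : G₁ →+ G₁).prodMap (φ₂ : G₂ →+ G₂))
      = entStar ‹TopologicalSpace G₁› φ₁ + entStar ‹TopologicalSpace G₂› φ₂ :=
  le_antisymm (entStar_prod_le φ₁ φ₂) (le_entStar_prod φ₁ φ₂)

theorem stmt10 {G₁ G₂ : Type*} [AddCommGroup G₁] [AddCommGroup G₂]
    [TopologicalSpace G₁] [IsTopologicalAddGroup G₁]
    [TopologicalSpace G₂] [IsTopologicalAddGroup G₂]
    (φ₁ : AddMonoid.End G₁) (hφ₁ : Continuous φ₁)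
    (φ₂ : AddMonoid.End G₂) (hφ₂ : Continuous φ₂) :
    entStar (inferInstance : TopologicalSpace (G₁ × G₂))
        ((φ₁ : G₁ →+ G₁).prodMap (φ₂ : G₂ →+ G₂))
      = entStar ‹TopologicalSpace G₁› φ₁ + entStar ‹TopologicalSpace G₂› φ₂ :=
  stmt10_general φ₁ φ₂
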